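/- arXiv:2106.08675 — 4 statements merged into one kernel-verified Lean document; each statement's English description precedes it below -/
import Mathlib

section
/- Let a_0,...,a_{n-1} ∈ 𝔻 and let φ_k be the Takenaka–Malmquist functions. Then for every z with |z| < 1, ∑_{k=0}^{n-1} |φ_k(z)|² = (1 - |B_n(z)|²)/(1 - |z|²), and for every z with |z| = 1, ∑_{k=0}^{n-1} |φ_k(z)|² = |B_n'(z)|. -/
noncomputable def blaschke (a : ℕ → ℂ) (n : ℕ) (z : ℂ) : ℂ :=
  ∏ j ∈ Finset.range n, (z - a j) / (1 - z * (starRingEnd ℂ) (a j))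

noncomputable def tm (a : ℕ → ℂ) (k : ℕ) (z : ℂ) : ℂ :=
  ((Real.sqrt (1 - (‖a k‖)^2) : ℝ) : ℂ) / (1 - z * (starRingEnd ℂ) (a k)) * blaschke a k z

lemma key_normSq (z a : ℂ) : Complex.normSq (1 - z * (starRingEnd ℂ) a) - Complex.normSq (z - a)
    = (1 - Complex.normSq z) * (1 - Complex.normSq a) := by
  simp [Complex.normSq_apply, Complex.sub_re, Complex.sub_im, Complex.mul_re, Complex.mul_im]
  ring

lemma nonvan (z a : ℂ) (h : ‖z‖ * ‖a‖ < 1) : 1 - z * (starRingEnd ℂ) a ≠ 0 := by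
  intro h0
  have : z * (starRingEnd ℂ) a = 1 := by linear_combination -h0
  have := congrArg (‖·‖) this
  simp [map_mul] at this
  rw [this] at h
  norm_num at h

lemma tm_sq (a : ℕ → ℂ) (k : ℕ) (z : ℂ) (hak : ‖a k‖ < 1) :
    (‖tm a k z‖)^2
      = (1 - Complex.normSq (a k)) / Complex.normSq (1 - z * (starRingEnd ℂ) (a k))
        * (‖blaschke a k z‖)^2 := by
  have h1 : (0:ℝ) ≤ 1 - (‖a k‖)^2 := by nlinarith [norm_nonneg (a k)]
  rw [tm, norm_mul, norm_div, Complex.norm_real, Real.norm_of_nonneg (Real.sqrt_nonneg _)]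
  rw [mul_pow, div_pow, Real.sq_sqrt h1]
  simp only [Complex.sq_norm]

lemma blaschke_succ (a : ℕ → ℂ) (k : ℕ) (z : ℂ) :
    blaschke a (k+1) z = blaschke a k z * ((z - a k) / (1 - z * (starRingEnd ℂ) (a k))) := by
  rw [blaschke, Finset.prod_range_succ, blaschke]

lemma term_eq (a : ℕ → ℂ) (k : ℕ) (z : ℂ) (hak : ‖a k‖ < 1)
    (hz : ‖z‖ < 1) :
    (‖tm a k z‖)^2
      = ((‖blaschke a k z‖)^2 - (‖blaschke a (k+1) z‖)^2)
        / (1 - (‖z‖)^2) := by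
  have hne : 1 - z * (starRingEnd ℂ) (a k) ≠ 0 := by
    apply nonvan; nlinarith [norm_nonneg z, norm_nonneg (a k)]
  have hns : Complex.normSq (1 - z * (starRingEnd ℂ) (a k)) ≠ 0 := (Complex.normSq_pos.2 hne).ne'
  have hz2 : 1 - Complex.normSq z ≠ 0 := by
    rw [← Complex.sq_norm]; nlinarith [norm_nonneg z]
  rw [tm_sq a k z hak, blaschke_succ, norm_mul, norm_div, mul_pow, div_pow]
  simp only [Complex.sq_norm]
  field_simp
  linear_combination (-(Complex.normSq (blaschke a k z))) * key_normSq z (a k)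

lemma circle_conj (z : ℂ) (hz : ‖z‖ = 1) : z * (starRingEnd ℂ) z = 1 := by
  rw [Complex.mul_conj]; norm_cast; rw [← Complex.sq_norm, hz]; norm_num

lemma one_sub_eq (z a : ℂ) (hz : ‖z‖ = 1) :
    1 - z * (starRingEnd ℂ) a = z * (starRingEnd ℂ) (z - a) := by
  rw [map_sub]; linear_combination -circle_conj z hz

lemma abs_one_sub (z a : ℂ) (hz : ‖z‖ = 1) :
    ‖1 - z * (starRingEnd ℂ) a‖ = ‖z - a‖ := by
  rw [one_sub_eq z a hz, norm_mul, Complex.norm_conj, hz, one_mul]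

lemma abs_blaschke_one (a : ℕ → ℂ) (n : ℕ) (z : ℂ) (ha : ∀ j < n, ‖a j‖ < 1)
    (hz : ‖z‖ = 1) : ‖blaschke a n z‖ = 1 := by
  rw [blaschke, norm_prod]
  apply Finset.prod_eq_one
  intro j hj
  have haj := ha j (Finset.mem_range.1 hj)
  have hne : ‖z - a j‖ ≠ 0 := by
    simp only [ne_eq, norm_eq_zero, sub_eq_zero]
    rintro rfl; exact absurd hz haj.ne
  rw [norm_div, abs_one_sub z (a j) hz, div_self hne]

lemma mobius_hasDeriv (w : ℂ) (z : ℂ) (hne : 1 - z * (starRingEnd ℂ) w ≠ 0) :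
    HasDerivAt (fun y => (y - w) / (1 - y * (starRingEnd ℂ) w))
      ((1 - w * (starRingEnd ℂ) w) / (1 - z * (starRingEnd ℂ) w)^2) z := by
  have hc : HasDerivAt (fun y : ℂ => y - w) 1 z := (hasDerivAt_id z).sub_const w
  have hd : HasDerivAt (fun y : ℂ => 1 - y * (starRingEnd ℂ) w) (-(starRingEnd ℂ) w) z := by
    simpa using ((hasDerivAt_id z).mul_const ((starRingEnd ℂ) w)).const_sub 1
  have := hc.div hd hne
  refine this.congr_deriv ?_
  field_simp
  ring

lemma small (z a : ℂ) (hz : ‖z‖ = 1) (hne : 1 - z * (starRingEnd ℂ) a ≠ 0)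
    (hza : z - a ≠ 0) :
    (1 - a * (starRingEnd ℂ) a) / (1 - z * (starRingEnd ℂ) a)^2
      = (((1 - Complex.normSq a) / Complex.normSq (z - a) : ℝ) : ℂ)
        * ((z - a) / (1 - z * (starRingEnd ℂ) a) / z) := by
  have hzne : z ≠ 0 := by intro h; rw [h] at hz; simp at hz
  have hcne : (starRingEnd ℂ) (z - a) ≠ 0 := by
    simp only [ne_eq, map_eq_zero]; exact hza
  have hms : ((Complex.normSq (z - a) : ℝ) : ℂ) = (z - a) * (starRingEnd ℂ) (z - a) :=
    (Complex.mul_conj _).symm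
  have hma : ((Complex.normSq a : ℝ) : ℂ) = a * (starRingEnd ℂ) a := (Complex.mul_conj _).symm
  have h3 := one_sub_eq z a hz
  push_cast
  rw [hms, hma, h3]
  generalize hw : (starRingEnd ℂ) (z - a) = w at hcne ⊢
  field_simp

lemma blaschke_hasDeriv (a : ℕ → ℂ) (n : ℕ) (z : ℂ) (ha : ∀ j < n, ‖a j‖ < 1)
    (hz : ‖z‖ = 1) :
    HasDerivAt (blaschke a n)
      (((∑ k ∈ Finset.range n, (1 - Complex.normSq (a k)) / Complex.normSq (z - a k) : ℝ) : ℂ)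
        * (blaschke a n z / z)) z := by
  induction n with
  | zero =>
      have h : blaschke a 0 = fun _ => (1:ℂ) := by funext y; simp [blaschke]
      rw [h]
      simpa using hasDerivAt_const z (1:ℂ)
  | succ n ih =>
      have ha' : ∀ j < n, ‖a j‖ < 1 := fun j hj => ha j (Nat.lt_succ_of_lt hj)
      have han : ‖a n‖ < 1 := ha n (Nat.lt_succ_self n)
      have hne : 1 - z * (starRingEnd ℂ) (a n) ≠ 0 := by
        apply nonvan; rw [hz, one_mul]; exact han
      have hzan : z - a n ≠ 0 := by
        intro h; rw [sub_eq_zero] at h; rw [← h] at han; exact absurd hz han.ne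
      have hkey : blaschke a (n+1) = fun y => blaschke a n y * ((y - a n) / (1 - y * (starRingEnd ℂ) (a n))) := by
        funext y; rw [blaschke, Finset.prod_range_succ, blaschke]
      rw [hkey]
      have H := (ih ha').mul (mobius_hasDeriv (a n) z hne)
      refine H.congr_deriv ?_
      simp only [Finset.sum_range_succ, Complex.ofReal_add]
      rw [small z (a n) hz hne hzan]
      ring

theorem stmt_7 (n : ℕ) (a : ℕ → ℂ) (ha : ∀ j < n, ‖a j‖ < 1) (z : ℂ) :
    (‖z‖ < 1 →
      ∑ k ∈ Finset.range n, (‖tm a k z‖)^2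
        = (1 - (‖blaschke a n z‖)^2) / (1 - (‖z‖)^2)) ∧
    (‖z‖ = 1 →
      ∑ k ∈ Finset.range n, (‖tm a k z‖)^2
        = ‖deriv (blaschke a n) z‖) := by
  constructor
  · intro hz
    have h1 : ∑ k ∈ Finset.range n, (‖tm a k z‖)^2
        = ∑ k ∈ Finset.range n,
            (((‖blaschke a k z‖)^2 - (‖blaschke a (k+1) z‖)^2)
              / (1 - (‖z‖)^2)) := by
      apply Finset.sum_congr rfl
      intro k hk
      exact term_eq a k z (ha k (Finset.mem_range.1 hk)) hz
    rw [h1, ← Finset.sum_div, Finset.sum_range_sub' (fun k => (‖blaschke a k z‖)^2)]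
    have h0 : blaschke a 0 z = 1 := by simp [blaschke]
    rw [h0]
    norm_num
  · intro hz
    have hd := (blaschke_hasDeriv a n z ha hz).deriv
    rw [hd, norm_mul, norm_div, Complex.norm_real, abs_blaschke_one a n z ha hz, hz, div_one,
      mul_one]
    have hr : (0:ℝ) ≤ ∑ k ∈ Finset.range n, (1 - Complex.normSq (a k)) / Complex.normSq (z - a k) := by
      apply Finset.sum_nonneg
      intro k hk
      have hak := ha k (Finset.mem_range.1 hk)
      apply div_nonneg
      · rw [← Complex.sq_norm]; nlinarith [norm_nonneg (a k)]
      · exact Complex.normSq_nonneg _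
    rw [Real.norm_of_nonneg hr]
    apply Finset.sum_congr rfl
    intro k hk
    have hkn := Finset.mem_range.1 hk
    have hak := ha k hkn
    have hBk : ‖blaschke a k z‖ = 1 :=
      abs_blaschke_one a k z (fun j hj => ha j (hj.trans hkn)) hz
    rw [tm_sq a k z hak, hBk]
    have : Complex.normSq (1 - z * (starRingEnd ℂ) (a k)) = Complex.normSq (z - a k) := by
      rw [← Complex.sq_norm, ← Complex.sq_norm (z - a k), abs_one_sub z (a k) hz]
    rw [this]
    norm_num
end

section
/- Fix n ≥ 1, a finite Blaschke product B_n with zeros in 𝔻, and z ∈ 𝔻 with B_n(z) ≠ 0. The supremum over all measurable μ : 𝕋 → ℂ with |μ| ≤ 1 a.e. of |B_n(z)·∫_𝕋 μ(t)·conj(B_n(t))·conj(t)/(1 - conj(t)·z)² dm(t)| equals |B_n(z)|/(1 - |z|²), and it is attained exactly when μ(t) = e^{iθ}·B_n(t)·(t - z)/(1 - t·conj(z)) a.e. on 𝕋 for some real θ. -/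
open Complex MeasureTheory Set

lemma circle_fact1' {t z : ℂ} (ht : ‖t‖ = 1) (hz : ‖z‖ < 1) :
    1 - t * z ≠ 0 := by
  intro h
  have h1 : t * z = 1 := by
    have := sub_eq_zero.mp h; exact this.symm
  have := congrArg (fun x : ℂ => ‖x‖) h1
  simp [map_mul, ht] at this
  exact absurd this (ne_of_lt hz)

lemma conj_mul_self {t : ℂ} (ht : ‖t‖ = 1) : (starRingEnd ℂ) t * t = 1 := by
  rw [mul_comm, Complex.mul_conj]
  norm_cast
  rw [Complex.normSq_eq_norm_sq, ht]; norm_num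

lemma circle_fact1 {t z : ℂ} (ht : ‖t‖ = 1) (hz : ‖z‖ < 1) :
    1 - (starRingEnd ℂ) t * z ≠ 0 :=
  circle_fact1' (by simp [ht]) hz

lemma blaschke_abs_one {a : ℕ → ℂ} {n : ℕ} (ha : ∀ j < n, ‖a j‖ < 1)
    {t : ℂ} (ht : ‖t‖ = 1) : ‖blaschke a n t‖ = 1 := by
  unfold blaschke
  rw [norm_prod]
  apply Finset.prod_eq_one
  intro j hj
  have haj := ha j (Finset.mem_range.mp hj)
  have hnum : t - a j ≠ 0 := by
    intro h2
    have : ‖t‖ = ‖a j‖ := by rw [sub_eq_zero.mp h2]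
    rw [ht] at this; linarith [haj]
  have hconj : (starRingEnd ℂ) (1 - t * (starRingEnd ℂ) (a j)) = (starRingEnd ℂ) t * (t - a j) := by
    have htt := conj_mul_self ht
    simp only [map_sub, map_mul, map_one, Complex.conj_conj]
    linear_combination -htt
  have habs : ‖1 - t * (starRingEnd ℂ) (a j)‖ = ‖t - a j‖ := by
    rw [← Complex.norm_conj (1 - t * (starRingEnd ℂ) (a j)), hconj]
    simp [map_mul, ht]
  rw [norm_div, habs, div_self (by simpa [sub_eq_zero] using hnum)]

lemma blaschke_ne_zero {a : ℕ → ℂ} {n : ℕ} (ha : ∀ j < n, ‖a j‖ < 1)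
    {t : ℂ} (ht : ‖t‖ = 1) : blaschke a n t ≠ 0 := by
  intro h
  have := blaschke_abs_one ha ht
  rw [h, norm_zero] at this; norm_num at this

lemma blaschke_conj_mul {a : ℕ → ℂ} {n : ℕ} (ha : ∀ j < n, ‖a j‖ < 1)
    {t : ℂ} (ht : ‖t‖ = 1) :
    blaschke a n t * (starRingEnd ℂ) (blaschke a n t) = 1 := by
  rw [Complex.mul_conj]
  norm_cast
  rw [Complex.normSq_eq_norm_sq, blaschke_abs_one ha ht]; norm_num

lemma one_sub_abs_sq_pos {z : ℂ} (hz : ‖z‖ < 1) : 0 < 1 - (‖z‖)^2 := by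
  nlinarith [norm_nonneg z]

lemma cauchy_int {z : ℂ} (hz : ‖z‖ < 1) :
    ∫ θ in (0:ℝ)..(2*Real.pi),
      Complex.exp (θ * Complex.I) * ((Complex.exp (θ * Complex.I) - z)⁻¹ *
        (1 - Complex.exp (θ * Complex.I) * (starRingEnd ℂ) z)⁻¹)
      = 2 * Real.pi * ((((1:ℝ) - (‖z‖)^2 : ℝ) : ℂ))⁻¹ := by
  set f : ℂ → ℂ := fun t => (1 - t * (starRingEnd ℂ) z)⁻¹ with hf
  have hne : ∀ x ∈ Metric.closedBall (0:ℂ) 1, 1 - x * (starRingEnd ℂ) z ≠ 0 := by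
    intro x hx h
    have hx1 : ‖x‖ ≤ 1 := by simpa using mem_closedBall_zero_iff.mp hx
    have h1 : ‖x * (starRingEnd ℂ) z‖ = 1 := by
      rw [sub_eq_zero] at h; rw [← h]; simp
    rw [norm_mul, Complex.norm_conj] at h1
    nlinarith [norm_nonneg z, norm_nonneg x]
  have hd : DiffContOnCl ℂ f (Metric.ball 0 1) := by
    refine ⟨fun x hx => ?_, fun x hx => ?_⟩
    · exact (((differentiableAt_const (1:ℂ)).sub (differentiableAt_id.mul_const _)).inv
        (hne x (Metric.ball_subset_closedBall hx))).differentiableWithinAt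
    · rw [closure_ball (0:ℂ) one_ne_zero] at hx
      exact (((differentiableAt_const (𝕜 := ℂ) (1:ℂ)).sub
        ((differentiableAt_id (𝕜 := ℂ)).mul_const _)).inv
        (hne x hx)).continuousAt.continuousWithinAt
  have hzb : z ∈ Metric.ball (0:ℂ) 1 := by simpa using hz
  have hC : (∮ t in C(0,1), (t - z)⁻¹ • f t) = (2 * Real.pi * Complex.I : ℂ) • f z :=
    hd.circleIntegral_sub_inv_smul hzb
  rw [circleIntegral] at hC
  simp only [deriv_circleMap, circleMap_zero, smul_eq_mul, Complex.ofReal_one, one_mul] at hC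
  have hrw : ∀ θ : ℝ, Complex.exp (θ * Complex.I) * Complex.I *
      ((Complex.exp (θ * Complex.I) - z)⁻¹ * f (Complex.exp (θ * Complex.I)))
      = Complex.I * (Complex.exp (θ * Complex.I) * ((Complex.exp (θ * Complex.I) - z)⁻¹ *
        (1 - Complex.exp (θ * Complex.I) * (starRingEnd ℂ) z)⁻¹)) := by
    intro θ; simp [hf]; ring
  rw [intervalIntegral.integral_congr (fun θ _ => hrw θ),
    intervalIntegral.integral_const_mul] at hC
  have hfz : f z = ((((1:ℝ) - (‖z‖)^2 : ℝ) : ℂ))⁻¹ := by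
    simp only [hf]
    congr 1
    rw [Complex.mul_conj]
    push_cast [Complex.normSq_eq_norm_sq]
    ring
  apply mul_left_cancel₀ Complex.I_ne_zero
  rw [hC, hfz]
  ring

section pointwise
variable {a : ℕ → ℂ} {n : ℕ} {t z : ℂ}

lemma t_sub_z_ne (ht : ‖t‖ = 1) (hz : ‖z‖ < 1) : t - z ≠ 0 := by
  intro h
  rw [sub_eq_zero] at h
  rw [← h, ht] at hz
  exact absurd hz (lt_irrefl 1)

lemma fact2 (ht : ‖t‖ = 1) : (1 : ℂ) - (starRingEnd ℂ) t * z
    = (starRingEnd ℂ) t * (t - z) := by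
  have htt := conj_mul_self ht
  linear_combination -htt

lemma fact3 (ht : ‖t‖ = 1) (hz : ‖z‖ < 1) :
    1 - t * (starRingEnd ℂ) z ≠ 0 :=
  circle_fact1' ht (by simpa using hz)

lemma WG_eq (ha : ∀ j < n, ‖a j‖ < 1) (ht : ‖t‖ = 1)
    (hz : ‖z‖ < 1) :
    blaschke a n t * ((t - z)/(1 - t * (starRingEnd ℂ) z)) *
      ((starRingEnd ℂ) (blaschke a n t) * (starRingEnd ℂ) t / (1 - (starRingEnd ℂ) t * z)^2)
    = t * ((t - z)⁻¹ * (1 - t * (starRingEnd ℂ) z)⁻¹) := by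
  have htt := conj_mul_self ht
  have hBB := blaschke_conj_mul ha ht
  have h1 := fact2 (z := z) ht
  have htz := t_sub_z_ne ht hz
  have hd1 := circle_fact1 ht hz
  have hd2 := fact3 ht hz
  have htne : t ≠ 0 := by
    intro h; rw [h, norm_zero] at ht; norm_num at ht
  have hctne : (starRingEnd ℂ) t ≠ 0 := by simpa using htne
  have hBne : blaschke a n t ≠ 0 := blaschke_ne_zero ha ht
  have hcB : (starRingEnd ℂ) (blaschke a n t) = (blaschke a n t)⁻¹ :=
    eq_inv_of_mul_eq_one_left (by rw [mul_comm] at hBB; exact hBB)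
  have hct : (starRingEnd ℂ) t = t⁻¹ := eq_inv_of_mul_eq_one_left htt
  rw [hcB, hct] at *
  field_simp

lemma absG_eq (ha : ∀ j < n, ‖a j‖ < 1) (ht : ‖t‖ = 1)
    (hz : ‖z‖ < 1) :
    ((‖(starRingEnd ℂ) (blaschke a n t) * (starRingEnd ℂ) t /
        (1 - (starRingEnd ℂ) t * z)^2‖ : ℝ) : ℂ)
    = t * ((t - z)⁻¹ * (1 - t * (starRingEnd ℂ) z)⁻¹) := by
  have htt := conj_mul_self ht
  have h1 := fact2 (z := z) ht
  have htz := t_sub_z_ne ht hz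
  have hd1 := circle_fact1 ht hz
  have hd2 := fact3 ht hz
  have htne : t ≠ 0 := by
    intro h; rw [h, norm_zero] at ht; norm_num at ht
  have habs : ‖(starRingEnd ℂ) (blaschke a n t) * (starRingEnd ℂ) t /
      (1 - (starRingEnd ℂ) t * z)^2‖ = (‖1 - (starRingEnd ℂ) t * z‖)⁻¹ ^ 2 := by
    rw [norm_div, norm_mul, Complex.norm_conj, Complex.norm_conj, blaschke_abs_one ha ht, ht,
      norm_pow]
    simp [inv_pow]
  rw [habs]
  have hcast : (((‖1 - (starRingEnd ℂ) t * z‖)⁻¹ ^ 2 : ℝ) : ℂ)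
      = ((1 - (starRingEnd ℂ) t * z) * (1 - t * (starRingEnd ℂ) z))⁻¹ := by
    have : ((‖1 - (starRingEnd ℂ) t * z‖ ^ 2 : ℝ) : ℂ)
        = (1 - (starRingEnd ℂ) t * z) * (1 - t * (starRingEnd ℂ) z) := by
      rw [← Complex.normSq_eq_norm_sq]
      rw [← Complex.mul_conj]
      congr 1
      simp [map_sub, map_mul]
    push_cast
    rw [← this]
    push_cast
    rw [inv_pow]
  rw [hcast, h1]
  have hct : (starRingEnd ℂ) t = t⁻¹ := eq_inv_of_mul_eq_one_left htt
  rw [hct]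
  field_simp

lemma absW_eq_one (ha : ∀ j < n, ‖a j‖ < 1) (ht : ‖t‖ = 1)
    (hz : ‖z‖ < 1) :
    ‖blaschke a n t * ((t - z)/(1 - t * (starRingEnd ℂ) z))‖ = 1 := by
  have habs : ‖1 - t * (starRingEnd ℂ) z‖ = ‖t - z‖ := by
    rw [← Complex.norm_conj (1 - t * (starRingEnd ℂ) z)]
    have : (starRingEnd ℂ) (1 - t * (starRingEnd ℂ) z) = (starRingEnd ℂ) t * (t - z) := by
      simp only [map_sub, map_mul, map_one, Complex.conj_conj]
      exact fact2 ht
    rw [this, norm_mul, Complex.norm_conj, ht, one_mul]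
  rw [norm_mul, blaschke_abs_one ha ht, norm_div, habs, one_mul,
    div_self (by simpa [sub_eq_zero] using t_sub_z_ne ht hz)]

end pointwise

noncomputable def Gfun (a : ℕ → ℂ) (n : ℕ) (z : ℂ) (θ : ℝ) : ℂ :=
  (starRingEnd ℂ) (blaschke a n (Complex.exp (θ * Complex.I))) *
    (starRingEnd ℂ) (Complex.exp (θ * Complex.I)) /
      (1 - (starRingEnd ℂ) (Complex.exp (θ * Complex.I)) * z)^2

noncomputable def Wfun (a : ℕ → ℂ) (n : ℕ) (z : ℂ) (w : ℂ) : ℂ :=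
  blaschke a n w * ((w - z)/(1 - w * (starRingEnd ℂ) z))

section integrals
variable {a : ℕ → ℂ} {n : ℕ} {z : ℂ}

lemma abs_exp_one (θ : ℝ) : ‖Complex.exp (θ * Complex.I)‖ = 1 :=
  Complex.norm_exp_ofReal_mul_I θ

lemma contG (ha : ∀ j < n, ‖a j‖ < 1) (hz : ‖z‖ < 1) :
    Continuous (Gfun a n z) := by
  have hc : Continuous (fun θ : ℝ => Complex.exp (θ * Complex.I)) := by
    exact Complex.continuous_exp.comp (by continuity)
  have hB : Continuous (fun θ : ℝ => blaschke a n (Complex.exp (θ * Complex.I))) := by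
    unfold blaschke
    apply continuous_finset_prod
    intro j hj
    apply Continuous.div
    · exact hc.sub continuous_const
    · exact continuous_const.sub (hc.mul continuous_const)
    · intro θ
      exact circle_fact1' (abs_exp_one θ) (by simpa using ha j (Finset.mem_range.mp hj))
  unfold Gfun
  apply Continuous.div
  · exact (Complex.continuous_conj.comp hB).mul (Complex.continuous_conj.comp hc)
  · exact ((continuous_const.sub ((Complex.continuous_conj.comp hc).mul continuous_const)).pow 2)
  · intro θ
    exact pow_ne_zero 2 (circle_fact1 (abs_exp_one θ) hz)

lemma integral_absG (ha : ∀ j < n, ‖a j‖ < 1) (hz : ‖z‖ < 1) :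
    ∫ θ in (0:ℝ)..(2*Real.pi), ‖Gfun a n z θ‖
      = 2 * Real.pi * ((1:ℝ) - (‖z‖)^2)⁻¹ := by
  have h1 : ∀ θ : ℝ, ((‖Gfun a n z θ‖ : ℝ) : ℂ)
      = Complex.exp (θ * Complex.I) * ((Complex.exp (θ * Complex.I) - z)⁻¹ *
        (1 - Complex.exp (θ * Complex.I) * (starRingEnd ℂ) z)⁻¹) := fun θ =>
    absG_eq ha (abs_exp_one θ) hz
  have h2 := cauchy_int hz
  rw [← intervalIntegral.integral_congr (fun θ _ => h1 θ)] at h2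
  rw [intervalIntegral.integral_ofReal] at h2
  have := Complex.ofReal_injective (by
    rw [h2]; push_cast; ring : ((∫ θ in (0:ℝ)..(2*Real.pi), ‖Gfun a n z θ‖ : ℝ) : ℂ)
      = ((2 * Real.pi * ((1:ℝ) - (‖z‖)^2)⁻¹ : ℝ) : ℂ))
  exact this

lemma integral_WG (ha : ∀ j < n, ‖a j‖ < 1) (hz : ‖z‖ < 1) :
    ∫ θ in (0:ℝ)..(2*Real.pi), Wfun a n z (Complex.exp (θ * Complex.I)) * Gfun a n z θ
      = ((2 * Real.pi * ((1:ℝ) - (‖z‖)^2)⁻¹ : ℝ) : ℂ) := by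
  have h1 : ∀ θ : ℝ, Wfun a n z (Complex.exp (θ * Complex.I)) * Gfun a n z θ
      = Complex.exp (θ * Complex.I) * ((Complex.exp (θ * Complex.I) - z)⁻¹ *
        (1 - Complex.exp (θ * Complex.I) * (starRingEnd ℂ) z)⁻¹) := fun θ =>
    WG_eq ha (abs_exp_one θ) hz
  rw [intervalIntegral.integral_congr (fun θ _ => h1 θ), cauchy_int hz]
  push_cast; ring

lemma WG_eq_absG (ha : ∀ j < n, ‖a j‖ < 1) (hz : ‖z‖ < 1) (θ : ℝ) :
    Wfun a n z (Complex.exp (θ * Complex.I)) * Gfun a n z θ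
      = ((‖Gfun a n z θ‖ : ℝ) : ℂ) := by
  rw [show Wfun a n z (Complex.exp (θ * Complex.I)) * Gfun a n z θ = _ from
    WG_eq ha (abs_exp_one θ) hz, ← absG_eq ha (abs_exp_one θ) hz]
  rfl

lemma G_ne_zero (ha : ∀ j < n, ‖a j‖ < 1) (hz : ‖z‖ < 1) (θ : ℝ) :
    Gfun a n z θ ≠ 0 := by
  unfold Gfun
  apply div_ne_zero
  · apply mul_ne_zero
    · simpa using blaschke_ne_zero ha (abs_exp_one θ)
    · simp [Complex.exp_ne_zero]
  · exact pow_ne_zero 2 (circle_fact1 (abs_exp_one θ) hz)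

end integrals

theorem stmt_13 (n : ℕ) (hn : 0 < n) (a : ℕ → ℂ) (ha : ∀ j < n, ‖a j‖ < 1)
    (z : ℂ) (hz : ‖z‖ < 1) (hBz : blaschke a n z ≠ 0)
    (F : (ℂ → ℂ) → ℝ)
    (hFdef : ∀ μ, F μ = ‖blaschke a n z * (((1/(2*Real.pi) : ℝ) : ℂ) *
        ∫ θ in (0:ℝ)..(2*Real.pi),
          μ (Complex.exp (θ * Complex.I)) *
            (starRingEnd ℂ) (blaschke a n (Complex.exp (θ * Complex.I))) *
            (starRingEnd ℂ) (Complex.exp (θ * Complex.I)) /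
              (1 - (starRingEnd ℂ) (Complex.exp (θ * Complex.I)) * z)^2)‖)
    (Adm : (ℂ → ℂ) → Prop)
    (hAdm : ∀ μ, Adm μ ↔ Measurable μ ∧
        ∀ᵐ (θ : ℝ) ∂(MeasureTheory.volume.restrict (Set.Ioc (0:ℝ) (2*Real.pi))),
          ‖μ (Complex.exp (θ * Complex.I))‖ ≤ 1) :
    IsGreatest {x : ℝ | ∃ μ, Adm μ ∧ x = F μ}
        (‖blaschke a n z‖ / (1 - (‖z‖)^2)) ∧
    ∀ μ, Adm μ →
      (F μ = ‖blaschke a n z‖ / (1 - (‖z‖)^2) ↔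
        ∃ θ₀ : ℝ, ∀ᵐ (θ : ℝ) ∂(MeasureTheory.volume.restrict (Set.Ioc (0:ℝ) (2*Real.pi))),
          μ (Complex.exp (θ * Complex.I))
            = Complex.exp (θ₀ * Complex.I) * blaschke a n (Complex.exp (θ * Complex.I)) *
              ((Complex.exp (θ * Complex.I) - z) /
                (1 - Complex.exp (θ * Complex.I) * (starRingEnd ℂ) z))) := by
  have hpi : (0:ℝ) < Real.pi := Real.pi_pos
  have hT : (0:ℝ) ≤ 2 * Real.pi := by positivity
  have hone : 0 < 1 - (‖z‖)^2 := one_sub_abs_sq_pos hz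
  set M : ℝ := 2 * Real.pi * ((1:ℝ) - (‖z‖)^2)⁻¹ with hM
  have hMpos : 0 < M := by rw [hM]; positivity
  have hBabs : 0 < ‖blaschke a n z‖ := norm_pos_iff.mpr hBz
  -- arithmetic identity for the target value
  have harith : ‖blaschke a n z‖ / (1 - (‖z‖)^2)
      = ‖blaschke a n z‖ * ((1/(2*Real.pi)) * M) := by
    rw [hM]; field_simp
  -- rewriting F
  have hint_congr : ∀ μ : ℂ → ℂ, (∫ θ in (0:ℝ)..(2*Real.pi),
      μ (Complex.exp (θ * Complex.I)) *
        (starRingEnd ℂ) (blaschke a n (Complex.exp (θ * Complex.I))) *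
        (starRingEnd ℂ) (Complex.exp (θ * Complex.I)) /
          (1 - (starRingEnd ℂ) (Complex.exp (θ * Complex.I)) * z)^2)
      = ∫ θ in (0:ℝ)..(2*Real.pi), μ (Complex.exp (θ * Complex.I)) * Gfun a n z θ := by
    intro μ
    apply intervalIntegral.integral_congr
    intro θ _
    simp only [Gfun, mul_div_assoc, mul_assoc]
  have hF' : ∀ μ : ℂ → ℂ, F μ = ‖blaschke a n z‖ * ((1/(2*Real.pi)) *
      ‖∫ θ in (0:ℝ)..(2*Real.pi),
        μ (Complex.exp (θ * Complex.I)) * Gfun a n z θ‖) := by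
    intro μ
    rw [hFdef μ, hint_congr μ, norm_mul, norm_mul, Complex.norm_real, Real.norm_eq_abs,
      abs_of_pos (by positivity : (0:ℝ) < 1/(2*Real.pi))]
  -- integrability
  have hGcont : Continuous (Gfun a n z) := contG ha hz
  have hGint : MeasureTheory.IntegrableOn (fun θ => ‖Gfun a n z θ‖)
      (Set.Ioc 0 (2*Real.pi)) MeasureTheory.volume :=
    (continuous_norm.comp hGcont).integrableOn_Ioc
  have hmeasc : Measurable (fun θ : ℝ => Complex.exp (θ * Complex.I)) := by
    apply Complex.measurable_exp.comp
    exact (Complex.measurable_ofReal.mul measurable_const)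
  have hint : ∀ μ : ℂ → ℂ, Measurable μ →
      (∀ᵐ (θ : ℝ) ∂(MeasureTheory.volume.restrict (Set.Ioc (0:ℝ) (2*Real.pi))),
        ‖μ (Complex.exp (θ * Complex.I))‖ ≤ 1) →
      MeasureTheory.IntegrableOn
        (fun θ : ℝ => μ (Complex.exp (θ * Complex.I)) * Gfun a n z θ)
        (Set.Ioc (0:ℝ) (2*Real.pi)) MeasureTheory.volume := by
    intro μ hm hb
    apply MeasureTheory.Integrable.mono' hGint
    · exact ((hm.comp hmeasc).mul hGcont.measurable).aestronglyMeasurable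
    · filter_upwards [hb] with θ hθ
      rw [norm_mul]
      have h0 := norm_nonneg (Gfun a n z θ)
      nlinarith
  -- upper bound for the integral
  have hub : ∀ μ : ℂ → ℂ, Measurable μ →
      (∀ᵐ (θ : ℝ) ∂(MeasureTheory.volume.restrict (Set.Ioc (0:ℝ) (2*Real.pi))),
        ‖μ (Complex.exp (θ * Complex.I))‖ ≤ 1) →
      ‖∫ θ in (0:ℝ)..(2*Real.pi),
        μ (Complex.exp (θ * Complex.I)) * Gfun a n z θ‖ ≤ M := by
    intro μ hm hb
    have hi := hint μ hm hb
    rw [intervalIntegral.integral_of_le hT]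
    calc ‖∫ θ in Set.Ioc (0:ℝ) (2*Real.pi), μ (Complex.exp (θ * Complex.I)) * Gfun a n z θ‖
        ≤ ∫ θ in Set.Ioc (0:ℝ) (2*Real.pi), ‖μ (Complex.exp (θ * Complex.I)) * Gfun a n z θ‖ :=
          MeasureTheory.norm_integral_le_integral_norm _
      _ ≤ ∫ θ in Set.Ioc (0:ℝ) (2*Real.pi), ‖Gfun a n z θ‖ := by
          apply MeasureTheory.integral_mono_ae hi.norm hGint
          filter_upwards [hb] with θ hθ
          rw [norm_mul]
          have h0 := norm_nonneg (Gfun a n z θ)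
          nlinarith
      _ = M := by
          rw [← intervalIntegral.integral_of_le hT, integral_absG ha hz]
  -- the optimal μ is admissible
  have hWadm : Adm (Wfun a n z) := by
    rw [hAdm]
    refine ⟨?_, ?_⟩
    · unfold Wfun blaschke
      apply Measurable.mul
      · apply Finset.measurable_prod
        intro j _
        exact ((measurable_id.sub measurable_const).div
          (measurable_const.sub (measurable_id.mul measurable_const)))
      · exact ((measurable_id.sub measurable_const).div
          (measurable_const.sub (measurable_id.mul measurable_const)))
    · filter_upwards with θ
      exact le_of_eq (absW_eq_one ha (abs_exp_one θ) hz)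
  have hWF : F (Wfun a n z)
      = ‖blaschke a n z‖ / (1 - (‖z‖)^2) := by
    rw [hF', integral_WG ha hz, Complex.norm_real, Real.norm_eq_abs, abs_of_pos hMpos, harith]
  refine ⟨⟨⟨Wfun a n z, hWadm, hWF.symm⟩, ?_⟩, ?_⟩
  · rintro x ⟨μ, hμ, rfl⟩
    obtain ⟨hm, hb⟩ := (hAdm μ).mp hμ
    rw [hF' μ, harith]
    have h1 := hub μ hm hb
    exact mul_le_mul_of_nonneg_left
      (mul_le_mul_of_nonneg_left h1 (by positivity)) (norm_nonneg _)
  · intro μ hμ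
    obtain ⟨hm, hb⟩ := (hAdm μ).mp hμ
    have hi := hint μ hm hb
    set S := ∫ θ in (0:ℝ)..(2*Real.pi),
      μ (Complex.exp (θ * Complex.I)) * Gfun a n z θ with hS
    constructor
    · intro hFeq
      rw [hF' μ, harith] at hFeq
      have habsS : ‖S‖ = M := by
        have h1 := mul_left_cancel₀ (ne_of_gt hBabs) hFeq
        have h2 : (1/(2*Real.pi) : ℝ) ≠ 0 := by positivity
        exact mul_left_cancel₀ h2 h1
      have hSpos : 0 < ‖S‖ := habsS ▸ hMpos
      have hSne : S ≠ 0 := by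
        intro h; rw [h, norm_zero] at hSpos; exact lt_irrefl 0 hSpos
      set u : ℂ := S / ((‖S‖ : ℝ) : ℂ) with hu
      have habsSne : ((‖S‖ : ℝ) : ℂ) ≠ 0 := by
        simpa using ne_of_gt hSpos
      have huabs : ‖u‖ = 1 := by
        rw [hu, norm_div, Complex.norm_real, Real.norm_eq_abs, abs_of_pos hSpos, div_self (ne_of_gt hSpos)]
      have huu : u * (starRingEnd ℂ) u = 1 := by
        rw [Complex.mul_conj]
        norm_cast
        rw [Complex.normSq_eq_norm_sq, huabs]; norm_num
      have huS : (starRingEnd ℂ) u * S = ((‖S‖ : ℝ) : ℂ) := by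
        rw [hu, map_div₀, Complex.conj_ofReal, div_mul_eq_mul_div,
          mul_comm ((starRingEnd ℂ) S) S, Complex.mul_conj, div_eq_iff habsSne]
        push_cast [Complex.normSq_eq_norm_sq]
        ring
      -- the nonneg function with zero integral
      have hS' : S = ∫ (θ : ℝ) in Set.Ioc (0:ℝ) (2*Real.pi),
          μ (Complex.exp (θ * Complex.I)) * Gfun a n z θ :=
        hS.trans (intervalIntegral.integral_of_le hT)
      have hre : (∫ (θ : ℝ) in Set.Ioc (0:ℝ) (2*Real.pi),
          ((starRingEnd ℂ) u * (μ (Complex.exp (θ * Complex.I)) * Gfun a n z θ)).re)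
          = ‖S‖ := by
        have hi2 : MeasureTheory.Integrable
            (fun θ : ℝ => (starRingEnd ℂ) u * (μ (Complex.exp (θ * Complex.I)) * Gfun a n z θ))
            (MeasureTheory.volume.restrict (Set.Ioc (0:ℝ) (2*Real.pi))) :=
          hi.const_mul _
        have h3 := integral_re hi2
        simp only [RCLike.re_eq_complex_re] at h3
        rw [MeasureTheory.integral_const_mul] at h3
        rw [h3, ← hS', huS, Complex.ofReal_re]
      set p : ℝ → ℝ := fun θ => ‖Gfun a n z θ‖ -
        ((starRingEnd ℂ) u * (μ (Complex.exp (θ * Complex.I)) * Gfun a n z θ)).re with hp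
      have hpint : MeasureTheory.Integrable p
          (MeasureTheory.volume.restrict (Set.Ioc (0:ℝ) (2*Real.pi))) := by
        apply MeasureTheory.Integrable.sub hGint
        have := (hi.const_mul ((starRingEnd ℂ) u)).re
        simpa [RCLike.re_eq_complex_re] using this
      have hpnn : ∀ᵐ (θ : ℝ) ∂(MeasureTheory.volume.restrict (Set.Ioc (0:ℝ) (2*Real.pi))),
          0 ≤ p θ := by
        filter_upwards [hb] with θ hθ
        show 0 ≤ ‖Gfun a n z θ‖ -
          ((starRingEnd ℂ) u * (μ (Complex.exp (θ * Complex.I)) * Gfun a n z θ)).re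
        have h1 := Complex.re_le_norm ((starRingEnd ℂ) u *
          (μ (Complex.exp (θ * Complex.I)) * Gfun a n z θ))
        rw [norm_mul, norm_mul, Complex.norm_conj, huabs, one_mul] at h1
        have h0 := norm_nonneg (Gfun a n z θ)
        nlinarith
      have hpzero : ∫ θ in Set.Ioc (0:ℝ) (2*Real.pi), p θ = 0 := by
        rw [hp]
        rw [MeasureTheory.integral_sub hGint (by
          have := (hi.const_mul ((starRingEnd ℂ) u)).re
          simpa [RCLike.re_eq_complex_re] using this)]
        rw [hre, ← intervalIntegral.integral_of_le hT, integral_absG ha hz, habsS, ← hM,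
          sub_self]
      have hp0 := (MeasureTheory.integral_eq_zero_iff_of_nonneg_ae hpnn hpint).mp hpzero
      refine ⟨Complex.arg u, ?_⟩
      have hexp : Complex.exp ((Complex.arg u : ℂ) * Complex.I) = u := by
        have := Complex.norm_mul_exp_arg_mul_I u
        rwa [huabs, Complex.ofReal_one, one_mul] at this
      filter_upwards [hp0, hb] with θ h1 h2
      have h1' : ((starRingEnd ℂ) u * (μ (Complex.exp (θ * Complex.I)) * Gfun a n z θ)).re
          = ‖Gfun a n z θ‖ := by
        have := h1
        rw [hp] at this
        simp only [Pi.zero_apply] at this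
        linarith [sub_eq_zero.mp this] 
      set w := (starRingEnd ℂ) u * (μ (Complex.exp (θ * Complex.I)) * Gfun a n z θ) with hw
      have hwabs_le : ‖w‖ ≤ ‖Gfun a n z θ‖ := by
        rw [hw, norm_mul, norm_mul, Complex.norm_conj, huabs, one_mul]
        have h0 := norm_nonneg (Gfun a n z θ)
        nlinarith
      have hwre : w.re = ‖w‖ := le_antisymm (Complex.re_le_norm w)
        (by rw [h1']; exact hwabs_le)
      -- so w is a nonnegative real, and its real part equals |G θ|
      have hwim : w.im = 0 := by
        apply Complex.abs_re_eq_norm.mp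
        rw [hwre, _root_.abs_of_nonneg (norm_nonneg w)]
      have hweq : w = ((‖Gfun a n z θ‖ : ℝ) : ℂ) := by
        rw [← h1']
        exact Complex.ext (by simp) (by simp [hwim])
      -- multiply by u
      have h5 : μ (Complex.exp (θ * Complex.I)) * Gfun a n z θ
          = u * (Wfun a n z (Complex.exp (θ * Complex.I)) * Gfun a n z θ) := by
        rw [WG_eq_absG ha hz θ, ← hweq, hw]
        rw [← mul_assoc, huu, one_mul]
      rw [show u * (Wfun a n z (Complex.exp (θ * Complex.I)) * Gfun a n z θ)
        = (u * Wfun a n z (Complex.exp (θ * Complex.I))) * Gfun a n z θ by ring] at h5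
      have h6 := mul_right_cancel₀ (G_ne_zero ha hz θ) h5
      rw [h6, hexp, Wfun]
      ring
    · rintro ⟨θ₀, hae⟩
      have hSval : S = Complex.exp ((θ₀:ℂ) * Complex.I) * ((M:ℝ):ℂ) := by
        rw [hS, intervalIntegral.integral_of_le hT]
        rw [MeasureTheory.integral_congr_ae (g := fun θ : ℝ =>
          Complex.exp ((θ₀:ℂ) * Complex.I) *
            (Wfun a n z (Complex.exp (θ * Complex.I)) * Gfun a n z θ)) (by
          filter_upwards [hae] with θ hθ
          rw [hθ, Wfun]
          ring)]
        rw [MeasureTheory.integral_const_mul, ← intervalIntegral.integral_of_le hT,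
          integral_WG ha hz, ← hM]
      rw [hF' μ, ← hS, hSval, harith, norm_mul, Complex.norm_exp_ofReal_mul_I,
        Complex.norm_real, Real.norm_eq_abs, abs_of_pos hMpos, one_mul]
end

section
/- Let B_n be a finite Blaschke product of degree n with zeros a_0,...,a_{n-1} ∈ 𝔻, and let α ∈ 𝔻, α ≠ 0, and w_α(z) = (z-α)/(1-z·conj(α)). Define S_n(w_α)(z) = ∑_{k=0}^{n-1}⟨w_α, φ_k⟩φ_k(z) (Fourier partial sum in the Takenaka–Malmquist system). Then S_n(w_α)(z) = ((1-|α|²)/conj(α))·(1 - conj(B_n(α))·B_n(z))/(1 - z·conj(α)) - (1/conj(α))·(1 - conj(B_n(0))·B_n(z)) for z ∈ 𝔻. -/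
open Complex Metric intervalIntegral Finset

private lemma den_ne {z w : ℂ} (hz : ‖z‖ ≤ 1) (hw : ‖w‖ < 1) :
    (1 : ℂ) - z * (starRingEnd ℂ) w ≠ 0 := by
  intro h0
  have h1 : z * (starRingEnd ℂ) w = 1 := by linear_combination -h0
  have h2 : ‖z * (starRingEnd ℂ) w‖ < 1 := by
    rw [norm_mul, Complex.norm_conj]
    calc ‖z‖ * ‖w‖ ≤ 1 * ‖w‖ := by
          exact mul_le_mul_of_nonneg_right hz (norm_nonneg w)
      _ = ‖w‖ := one_mul _
      _ < 1 := hw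
  rw [h1] at h2; simp at h2

private lemma intervalIntegral_conj {f : ℝ → ℂ} {a b : ℝ} :
    ∫ x in a..b, (starRingEnd ℂ) (f x) = (starRingEnd ℂ) (∫ x in a..b, f x) := by
  simp [intervalIntegral, integral_conj]

private lemma tm_diffAt (a : ℕ → ℂ) (k : ℕ) (hk : ∀ j ≤ k, ‖a j‖ < 1)
    {z : ℂ} (hz : ‖z‖ ≤ 1) : DifferentiableAt ℂ (tm a k) z := by
  have hb : DifferentiableAt ℂ (blaschke a k) z := by
    apply DifferentiableAt.fun_finsetProd
    intro j hj
    exact DifferentiableAt.div (by fun_prop) (by fun_prop)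
      (den_ne hz (hk j (Finset.mem_range.mp hj).le))
  exact DifferentiableAt.mul
    (DifferentiableAt.div (differentiableAt_const _) (by fun_prop) (den_ne hz (hk k le_rfl))) hb

private lemma cauchy_key {f : ℂ → ℂ} (hf : ∀ z : ℂ, ‖z‖ ≤ 1 → DifferentiableAt ℂ f z)
    {w : ℂ} (hw : ‖w‖ < 1) :
    ∫ θ in (0:ℝ)..(2*Real.pi),
        Complex.exp (θ*Complex.I) * f (Complex.exp (θ*Complex.I)) / (Complex.exp (θ*Complex.I) - w)
      = 2 * Real.pi * f w := by
  have hd : DiffContOnCl ℂ f (ball (0:ℂ) 1) := by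
    apply DifferentiableOn.diffContOnCl
    rw [closure_ball (0:ℂ) one_ne_zero]
    intro x hx
    exact (hf x (by simpa using mem_closedBall_zero_iff.mp hx)).differentiableWithinAt
  have hmem : w ∈ ball (0:ℂ) 1 :=
    mem_ball_zero_iff.mpr (by exact hw)
  have h := hd.circleIntegral_sub_inv_smul hmem
  rw [circleIntegral] at h
  simp only [deriv_circleMap, circleMap, Complex.ofReal_one, Complex.ofReal_zero, zero_add,
    one_mul, smul_eq_mul] at h
  have h2 : ∀ θ : ℝ, Complex.exp (θ*Complex.I) * Complex.I *
      ((Complex.exp (θ*Complex.I) - w)⁻¹ * f (Complex.exp (θ*Complex.I)))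
      = Complex.I * (Complex.exp (θ*Complex.I) * f (Complex.exp (θ*Complex.I)) /
          (Complex.exp (θ*Complex.I) - w)) := by
    intro θ; ring
  rw [intervalIntegral.integral_congr (g := fun θ : ℝ => Complex.I *
      (Complex.exp (θ*Complex.I) * f (Complex.exp (θ*Complex.I)) /
        (Complex.exp (θ*Complex.I) - w))) (fun θ _ => h2 θ),
    intervalIntegral.integral_const_mul] at h
  apply mul_left_cancel₀ Complex.I_ne_zero
  rw [h]; ring

private lemma coeff (a : ℕ → ℂ) (k : ℕ) (hk : ∀ j ≤ k, ‖a j‖ < 1)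
    (α : ℂ) (hα : ‖α‖ < 1) (hα0 : α ≠ 0) :
    (((1/(2*Real.pi) : ℝ) : ℂ) * ∫ θ in (0:ℝ)..(2*Real.pi),
          ((Complex.exp (θ * Complex.I) - α) /
              (1 - Complex.exp (θ * Complex.I) * (starRingEnd ℂ) α)) *
            (starRingEnd ℂ) (tm a k (Complex.exp (θ * Complex.I))))
      = ((1 - (‖α‖)^2 : ℝ) : ℂ) / (starRingEnd ℂ) α * (starRingEnd ℂ) (tm a k α)
        - ((starRingEnd ℂ) α)⁻¹ * (starRingEnd ℂ) (tm a k 0) := by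
  set f := tm a k with hf
  have hfd : ∀ z : ℂ, ‖z‖ ≤ 1 → DifferentiableAt ℂ f z := fun z hz => tm_diffAt a k hk hz
  have habs : ∀ θ : ℝ, ‖Complex.exp (θ * Complex.I)‖ = 1 := fun θ =>
    Complex.norm_exp_ofReal_mul_I θ
  have hcont : Continuous fun θ : ℝ => f (Complex.exp (θ * Complex.I)) := by
    rw [continuous_iff_continuousAt]
    intro θ
    show ContinuousAt (f ∘ fun θ : ℝ => Complex.exp (θ*Complex.I)) θ
    have hin : Continuous fun θ : ℝ => Complex.exp ((θ:ℂ)*Complex.I) := by continuity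
    exact ContinuousAt.comp (x := θ) ((hfd _ (habs θ).le).continuousAt) hin.continuousAt
  have hcont2 : Continuous fun θ : ℝ =>
      Complex.exp (θ*Complex.I) * f (Complex.exp (θ*Complex.I)) / (Complex.exp (θ*Complex.I) - α) := by
    apply Continuous.div (Continuous.mul (by fun_prop) hcont) (by fun_prop)
    intro θ
    intro h0
    have : Complex.exp (θ*Complex.I) = α := by linear_combination h0
    rw [← this, habs θ] at hα; simp at hα
  have key0 : ∫ θ in (0:ℝ)..(2*Real.pi), f (Complex.exp (θ*Complex.I)) = 2 * Real.pi * f 0 := by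
    have h := cauchy_key hfd (w := 0) (by simp)
    rw [← h]
    apply intervalIntegral.integral_congr
    intro θ _
    have he : Complex.exp (θ*Complex.I) ≠ 0 := Complex.exp_ne_zero _
    simp only [sub_zero]
    field_simp
  have keyα := cauchy_key hfd hα
  -- pointwise conjugate identity
  have hpt : ∀ θ : ℝ, (starRingEnd ℂ) (((Complex.exp (θ * Complex.I) - α) /
          (1 - Complex.exp (θ * Complex.I) * (starRingEnd ℂ) α)) *
        (starRingEnd ℂ) (f (Complex.exp (θ * Complex.I))))
      = (-1/α) * f (Complex.exp (θ*Complex.I))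
        + (((1 - (‖α‖)^2 : ℝ) : ℂ)/α) *
          (Complex.exp (θ*Complex.I) * f (Complex.exp (θ*Complex.I)) /
            (Complex.exp (θ*Complex.I) - α)) := by
    intro θ
    set e := Complex.exp (θ*Complex.I) with he
    have he0 : e ≠ 0 := Complex.exp_ne_zero _
    have hce : (starRingEnd ℂ) e = e⁻¹ := by
      apply eq_inv_of_mul_eq_one_left
      rw [mul_comm, Complex.mul_conj]
      norm_cast
      rw [← Complex.sq_norm, habs θ]; norm_num
    have heα : e - α ≠ 0 := by
      intro h0
      have : e = α := by linear_combination h0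
      rw [← this, habs θ] at hα; simp at hα
    have haa : ((‖α‖ : ℝ) : ℂ)^2 = α * (starRingEnd ℂ) α := by
      rw [← Complex.ofReal_pow, Complex.sq_norm, Complex.mul_conj]
    simp only [map_mul, map_div₀, map_sub, map_one, Complex.conj_conj, hce]
    push_cast
    field_simp
    ring_nf
    linear_combination (e*f e) * haa
  have hi1 : IntervalIntegrable (fun θ : ℝ => (-1/α) * f (Complex.exp (θ*Complex.I)))
      MeasureTheory.volume 0 (2*Real.pi) := (continuous_const.mul hcont).intervalIntegrable _ _
  have hi2 : IntervalIntegrable (fun θ : ℝ => (((1 - (‖α‖)^2 : ℝ) : ℂ)/α) *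
      (Complex.exp (θ*Complex.I) * f (Complex.exp (θ*Complex.I)) / (Complex.exp (θ*Complex.I) - α)))
      MeasureTheory.volume 0 (2*Real.pi) := (continuous_const.mul hcont2).intervalIntegrable _ _
  have hJ : (starRingEnd ℂ) (∫ θ in (0:ℝ)..(2*Real.pi),
        ((Complex.exp (θ * Complex.I) - α) / (1 - Complex.exp (θ * Complex.I) * (starRingEnd ℂ) α)) *
          (starRingEnd ℂ) (f (Complex.exp (θ * Complex.I))))
      = 2 * Real.pi * ((-1/α) * f 0 + (((1 - (‖α‖)^2 : ℝ) : ℂ)/α) * f α) := by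
    rw [← _root_.intervalIntegral_conj, intervalIntegral.integral_congr (fun θ _ => hpt θ),
      intervalIntegral.integral_add hi1 hi2, intervalIntegral.integral_const_mul,
      intervalIntegral.integral_const_mul, key0, keyα]
    ring
  have hJ2 := congrArg (starRingEnd ℂ) hJ
  rw [Complex.conj_conj] at hJ2
  rw [hJ2]
  simp only [map_mul, map_add, map_div₀, map_neg, map_one, Complex.conj_conj,
    Complex.conj_ofReal, map_ofNat]
  have hπ : (Real.pi : ℂ) ≠ 0 := by exact_mod_cast Real.pi_ne_zero
  have hcα : (starRingEnd ℂ) α ≠ 0 := by simpa using hα0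
  push_cast
  field_simp
  ring

private lemma CD (a : ℕ → ℂ) (α z : ℂ) (hα : ‖α‖ < 1) (hz : ‖z‖ < 1) :
    ∀ n : ℕ, (∀ j < n, ‖a j‖ < 1) →
      ∑ k ∈ Finset.range n, (starRingEnd ℂ) (tm a k α) * tm a k z
        = (1 - (starRingEnd ℂ) (blaschke a n α) * blaschke a n z) / (1 - z * (starRingEnd ℂ) α)
  | 0, _ => by simp [blaschke]
  | (n+1), ha => by
    have han : ‖a n‖ < 1 := ha n (Nat.lt_succ_self n)
    have ih := CD a α z hα hz n (fun j hj => ha j (hj.trans (Nat.lt_succ_self n)))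
    rw [Finset.sum_range_succ, ih]
    have h1 : (1:ℂ) - z * (starRingEnd ℂ) α ≠ 0 := den_ne hz.le hα
    have h2 : (1:ℂ) - z * (starRingEnd ℂ) (a n) ≠ 0 := den_ne hz.le han
    have h3 : (1:ℂ) - α * (starRingEnd ℂ) (a n) ≠ 0 := den_ne hα.le han
    have h4 : (1:ℂ) - (starRingEnd ℂ) α * a n ≠ 0 := by
      intro h
      apply h3
      apply_fun (starRingEnd ℂ) at h
      simpa [map_sub, map_mul, Complex.conj_conj] using h
    have hc : ((Real.sqrt (1 - (‖a n‖)^2) : ℝ):ℂ) *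
        ((Real.sqrt (1 - (‖a n‖)^2) : ℝ):ℂ) = 1 - a n * (starRingEnd ℂ) (a n) := by
      rw [← Complex.ofReal_mul, Real.mul_self_sqrt (by nlinarith [norm_nonneg (a n)]),
        Complex.mul_conj, ← Complex.sq_norm]
      push_cast
      ring
    have hbz : blaschke a (n+1) z = blaschke a n z * ((z - a n)/(1 - z * (starRingEnd ℂ) (a n))) :=
      Finset.prod_range_succ _ _
    have hbα : blaschke a (n+1) α = blaschke a n α * ((α - a n)/(1 - α * (starRingEnd ℂ) (a n))) :=
      Finset.prod_range_succ _ _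
    have htm : (starRingEnd ℂ) (tm a n α) * tm a n z
        = (1 - a n * (starRingEnd ℂ) (a n)) / (1 - (starRingEnd ℂ) α * a n) /
            (1 - z * (starRingEnd ℂ) (a n))
          * ((starRingEnd ℂ) (blaschke a n α) * blaschke a n z) := by
      unfold tm
      simp only [map_mul, map_div₀, map_sub, map_one, Complex.conj_conj, Complex.conj_ofReal]
      rw [← hc]
      ring
    rw [hbz, hbα, htm]
    simp only [map_mul, map_div₀, map_sub, map_one, Complex.conj_conj]
    field_simp
    ring


theorem stmt_16 (n : ℕ) (a : ℕ → ℂ) (ha : ∀ j < n, ‖a j‖ < 1)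
    (α : ℂ) (hα : ‖α‖ < 1) (hα0 : α ≠ 0)
    (z : ℂ) (hz : ‖z‖ < 1) :
    ∑ k ∈ Finset.range n,
        (((1/(2*Real.pi) : ℝ) : ℂ) * ∫ θ in (0:ℝ)..(2*Real.pi),
          ((Complex.exp (θ * Complex.I) - α) /
              (1 - Complex.exp (θ * Complex.I) * (starRingEnd ℂ) α)) *
            (starRingEnd ℂ) (tm a k (Complex.exp (θ * Complex.I)))) * tm a k z
      = ((1 - (‖α‖)^2 : ℝ) : ℂ) / (starRingEnd ℂ) α *
          ((1 - (starRingEnd ℂ) (blaschke a n α) * blaschke a n z) / (1 - z * (starRingEnd ℂ) α))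
        - ((starRingEnd ℂ) α)⁻¹ * (1 - (starRingEnd ℂ) (blaschke a n 0) * blaschke a n z) := by
  have hs : ∀ k ∈ Finset.range n,
      (((1/(2*Real.pi) : ℝ) : ℂ) * ∫ θ in (0:ℝ)..(2*Real.pi),
          ((Complex.exp (θ * Complex.I) - α) /
              (1 - Complex.exp (θ * Complex.I) * (starRingEnd ℂ) α)) *
            (starRingEnd ℂ) (tm a k (Complex.exp (θ * Complex.I)))) * tm a k z
      = ((1 - (‖α‖)^2 : ℝ) : ℂ) / (starRingEnd ℂ) α *
          ((starRingEnd ℂ) (tm a k α) * tm a k z)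
        - ((starRingEnd ℂ) α)⁻¹ * ((starRingEnd ℂ) (tm a k 0) * tm a k z) := by
    intro k hk
    rw [coeff a k (fun j hj => ha j (lt_of_le_of_lt hj (Finset.mem_range.mp hk))) α hα hα0]
    ring
  rw [Finset.sum_congr rfl hs, Finset.sum_sub_distrib, ← Finset.mul_sum, ← Finset.mul_sum,
    CD a α z hα hz n ha, CD a 0 z (by simp) hz n ha]
  simp
end

section
/- Let B_n be a finite Blaschke product of degree n ≥ 1 with zeros in 𝔻 and z ∈ 𝕋. For 0 < λ < 1, let f_λ(t) = conj(z)·(t - λz)/(1 - t·λ·conj(z)). Then f_λ maps 𝔻 into 𝔻, |f_λ| = 1 on 𝕋, and lim_{λ→1⁻} (1 - |B_n(λz)|²)/(1 - λ²) = |B_n'(z)|. -/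
open Complex Filter



lemma key_id (t w : ℂ) : Complex.normSq (1 - t * (starRingEnd ℂ) w) - Complex.normSq (t - w)
    = (1 - Complex.normSq t) * (1 - Complex.normSq w) := by
  simp [Complex.normSq_apply, Complex.mul_re, Complex.mul_im]; ring

lemma mobius_eq (t w : ℂ) (ht : ‖t‖ = 1) (hw : ‖w‖ < 1) :
    ‖(t - w) / (1 - t * (starRingEnd ℂ) w)‖ = 1 := by
  have h1 : Complex.normSq t = 1 := by rw [← Complex.sq_norm, ht]; ring
  have hkey := key_id t w
  rw [h1] at hkey
  have hden : (1 - t * (starRingEnd ℂ) w) ≠ 0 := by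
    intro h0
    have h2 : t * (starRingEnd ℂ) w = 1 := by linear_combination -h0
    have : ‖t * (starRingEnd ℂ) w‖ = 1 := by rw [h2]; simp
    rw [norm_mul, ht, one_mul, Complex.norm_conj] at this
    exact absurd this (ne_of_lt hw)
  rw [norm_div, div_eq_one_iff_eq (norm_ne_zero_iff.2 hden)]
  have e1 := Complex.sq_norm (t - w)
  have e2 := Complex.sq_norm (1 - t * (starRingEnd ℂ) w)
  nlinarith [norm_nonneg (t-w), norm_nonneg (1 - t * (starRingEnd ℂ) w)]

lemma hkey_lemma (z a : ℂ) (hz1 : z * (starRingEnd ℂ) z = 1)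
    (h1 : (1 - z * (starRingEnd ℂ) a) ≠ 0) :
    (1 - (Complex.normSq a : ℂ)) / (1 - z * (starRingEnd ℂ) a)^2
      = (z - a) / (1 - z * (starRingEnd ℂ) a) * (starRingEnd ℂ) z *
        ((1 - (Complex.normSq a : ℂ)) / (Complex.normSq (1 - z * (starRingEnd ℂ) a) : ℂ)) := by
  have h2 : (Complex.normSq (1 - z * (starRingEnd ℂ) a) : ℂ) ≠ 0 := by
    exact_mod_cast (Complex.normSq_pos.2 h1).ne'
  have hm : (1 - z * (starRingEnd ℂ) a) * (1 - (starRingEnd ℂ) z * a)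
      = (Complex.normSq (1 - z * (starRingEnd ℂ) a) : ℂ) := by
    simpa [map_sub, map_mul] using Complex.mul_conj (1 - z * (starRingEnd ℂ) a)
  have hr : (z - a) / (1 - z * (starRingEnd ℂ) a) * (starRingEnd ℂ) z *
        ((1 - (Complex.normSq a : ℂ)) / (Complex.normSq (1 - z * (starRingEnd ℂ) a) : ℂ))
      = ((z - a) * (starRingEnd ℂ) z * (1 - (Complex.normSq a : ℂ))) /
        ((1 - z * (starRingEnd ℂ) a) * (Complex.normSq (1 - z * (starRingEnd ℂ) a) : ℂ)) := by
    field_simp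
  rw [hr, div_eq_div_iff (pow_ne_zero 2 h1) (mul_ne_zero h1 h2)]
  linear_combination (-(1 - (Complex.normSq a : ℂ)) * (1 - z * (starRingEnd ℂ) a)) * hm +
    (-(1 - (Complex.normSq a : ℂ)) * (1 - z * (starRingEnd ℂ) a)^2) * hz1

lemma mobius_lt (t w : ℂ) (ht : ‖t‖ < 1) (hw : ‖w‖ < 1) :
    ‖(t - w) / (1 - t * (starRingEnd ℂ) w)‖ < 1 := by
  have h1 : Complex.normSq t < 1 := by
    rw [Complex.normSq_eq_norm_sq]; nlinarith [norm_nonneg t]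
  have h2 : Complex.normSq w < 1 := by
    rw [Complex.normSq_eq_norm_sq]; nlinarith [norm_nonneg w]
  have hkey := key_id t w
  have hlt : Complex.normSq (t - w) < Complex.normSq (1 - t * (starRingEnd ℂ) w) := by
    nlinarith [Complex.normSq_nonneg (t - w)]
  have hden : ‖1 - t * (starRingEnd ℂ) w‖ ≠ 0 := by
    intro h0
    rw [norm_eq_zero] at h0
    rw [h0] at hlt
    simp at hlt
    exact absurd hlt (not_lt.2 (Complex.normSq_nonneg _))
  rw [norm_div, div_lt_one (lt_of_le_of_ne (norm_nonneg _) (Ne.symm hden))]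
  have e1 := Complex.sq_norm (t - w)
  have e2 := Complex.sq_norm (1 - t * (starRingEnd ℂ) w)
  nlinarith [norm_nonneg (t-w), norm_nonneg (1 - t * (starRingEnd ℂ) w)]

theorem aux_part_b (n : ℕ) (a : ℕ → ℂ) (ha : ∀ j < n, ‖a j‖ < 1)
    (z : ℂ) (hz : ‖z‖ = 1) :
    Filter.Tendsto
      (fun lam : ℝ => (1 - (‖blaschke a n ((lam : ℂ) * z)‖)^2) / (1 - lam^2))
      (nhdsWithin 1 (Set.Iio 1)) (nhds (‖deriv (blaschke a n) z‖)) := by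
  have hnsz : Complex.normSq z = 1 := by rw [Complex.normSq_eq_norm_sq, hz]; norm_num
  have hz1 : z * (starRingEnd ℂ) z = 1 := by rw [Complex.mul_conj, hnsz]; norm_num
  set f : ℕ → ℂ → ℂ := fun j w => (w - a j) / (1 - w * (starRingEnd ℂ) (a j)) with hf
  have hBf : ∀ w, blaschke a n w = ∏ j ∈ Finset.range n, f j w := fun w => rfl
  have hden : ∀ j < n, (1 - z * (starRingEnd ℂ) (a j)) ≠ 0 := by
    intro j hj h0
    have h1 : z * (starRingEnd ℂ) (a j) = 1 := by linear_combination -h0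
    have : ‖z * (starRingEnd ℂ) (a j)‖ = 1 := by rw [h1]; simp
    rw [norm_mul, hz, one_mul, Complex.norm_conj] at this
    exact absurd this (ne_of_lt (ha j hj))
  set d : ℕ → ℂ := fun j =>
    (1 - (Complex.normSq (a j) : ℂ)) / (1 - z * (starRingEnd ℂ) (a j))^2 with hdd
  set c : ℕ → ℝ := fun j =>
    (1 - Complex.normSq (a j)) / Complex.normSq (1 - z * (starRingEnd ℂ) (a j)) with hcc
  set S : ℝ := ∑ j ∈ Finset.range n, c j with hS
  have hc_nonneg : ∀ j < n, 0 ≤ c j := by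
    intro j hj
    have h1 : Complex.normSq (a j) < 1 := by
      rw [Complex.normSq_eq_norm_sq]; nlinarith [ha j hj, norm_nonneg (a j)]
    have h2 : 0 < Complex.normSq (1 - z * (starRingEnd ℂ) (a j)) :=
      Complex.normSq_pos.2 (hden j hj)
    exact div_nonneg (by linarith) (le_of_lt h2)
  have hS_nonneg : 0 ≤ S := Finset.sum_nonneg fun j hj =>
    hc_nonneg j (Finset.mem_range.1 hj)
  -- derivative of each factor
  have hfd : ∀ j ∈ Finset.range n, HasDerivAt (f j) (d j) z := by
    intro j hj
    have hj' := Finset.mem_range.1 hj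
    have hnum' : HasDerivAt (fun w : ℂ => w - a j) 1 z := (hasDerivAt_id z).sub_const _
    have hd' : HasDerivAt (fun w : ℂ => 1 - w * (starRingEnd ℂ) (a j))
        (-((starRingEnd ℂ) (a j))) z := by
      simpa using ((hasDerivAt_id z).mul_const ((starRingEnd ℂ) (a j))).const_sub 1
    have H := hnum'.div hd' (hden j hj')
    have heq : (1 * (1 - z * (starRingEnd ℂ) (a j)) - (z - a j) * -((starRingEnd ℂ) (a j))) /
        (1 - z * (starRingEnd ℂ) (a j)) ^ 2 = d j := by
      rw [hdd]
      simp only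
      congr 1
      linear_combination -Complex.mul_conj (a j)
    exact heq ▸ H
  -- derivative of product
  have hBd : HasDerivAt (blaschke a n)
      (∑ j ∈ Finset.range n, (∏ k ∈ (Finset.range n).erase j, f k z) • d j) z :=
    HasDerivAt.fun_finsetProd hfd
  set D : ℂ := ∑ j ∈ Finset.range n, (∏ k ∈ (Finset.range n).erase j, f k z) • d j with hD
  have hB1 : ‖blaschke a n z‖ = 1 := by
    rw [hBf, norm_prod]
    exact Finset.prod_eq_one fun j hj =>
      mobius_eq z (a j) hz (ha j (Finset.mem_range.1 hj))
  have hBnsq : Complex.normSq (blaschke a n z) = 1 := by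
    rw [Complex.normSq_eq_norm_sq, hB1]; norm_num
  -- D = B z * conj z * S
  have hDval : D = blaschke a n z * (starRingEnd ℂ) z * (S : ℂ) := by
    rw [hD, hS]
    push_cast
    rw [Finset.mul_sum]
    refine Finset.sum_congr rfl fun j hj => ?_
    have hj' := Finset.mem_range.1 hj
    have hprod : (∏ k ∈ (Finset.range n).erase j, f k z) * f j z = blaschke a n z := by
      rw [hBf]; exact Finset.prod_erase_mul _ _ hj
    have hkey : d j = f j z * (starRingEnd ℂ) z *
        ((1 - (Complex.normSq (a j) : ℂ)) /
          (Complex.normSq (1 - z * (starRingEnd ℂ) (a j)) : ℂ)) :=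
      hkey_lemma z (a j) hz1 (hden j hj')
    rw [smul_eq_mul, hkey, ← hprod, hcc]
    push_cast
    ring
  have habsD : ‖D‖ = S := by
    rw [hDval, norm_mul, norm_mul, hB1, Complex.norm_conj, hz, Complex.norm_real, Real.norm_eq_abs,
      _root_.abs_of_nonneg hS_nonneg, one_mul, one_mul]
  have hderivB : deriv (blaschke a n) z = D := hBd.deriv
  -- real-variable derivative
  have hmulz : HasDerivAt (fun w : ℂ => blaschke a n (w * z)) (D * z) 1 := by
    have hi : HasDerivAt (fun w : ℂ => w * z) z 1 := by
      simpa using (hasDerivAt_id (1:ℂ)).mul_const z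
    have := HasDerivAt.comp (1:ℂ) (by rwa [one_mul] : HasDerivAt (blaschke a n) D ((1:ℂ) * z)) hi
    exact this
  have hR : HasDerivAt (fun lam : ℝ => blaschke a n ((lam : ℂ) * z)) (D * z) 1 := by
    have := hmulz.comp_ofReal (z := (1:ℝ))
    simpa using this
  have hre : HasDerivAt (fun lam : ℝ => (blaschke a n ((lam : ℂ) * z)).re) ((D * z).re) 1 := by
    exact Complex.reCLM.hasFDerivAt.comp_hasDerivAt 1 hR
  have him : HasDerivAt (fun lam : ℝ => (blaschke a n ((lam : ℂ) * z)).im) ((D * z).im) 1 := by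
    exact Complex.imCLM.hasFDerivAt.comp_hasDerivAt 1 hR
  have hDz : D * z = (S : ℂ) * blaschke a n z := by
    rw [hDval]; linear_combination blaschke a n z * (S:ℂ) * hz1
  have hDzre : (D * z).re = S * (blaschke a n z).re := by
    rw [hDz]; simp [Complex.mul_re]
  have hDzim : (D * z).im = S * (blaschke a n z).im := by
    rw [hDz]; simp [Complex.mul_im]
  have hB1z : ((1:ℝ):ℂ) * z = z := by norm_num
  set g : ℝ → ℝ := fun lam => Complex.normSq (blaschke a n ((lam : ℂ) * z)) with hg
  have hgd : HasDerivAt g (2 * S) 1 := by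
    have H := (hre.mul hre).add (him.mul him)
    have hfun : (fun lam : ℝ => (blaschke a n ((lam : ℂ) * z)).re *
        (blaschke a n ((lam : ℂ) * z)).re + (blaschke a n ((lam : ℂ) * z)).im *
        (blaschke a n ((lam : ℂ) * z)).im) = g := by
      funext lam; rw [hg]; simp [Complex.normSq_apply]
    replace H : HasDerivAt g ((D * z).re * (blaschke a n (((1:ℝ):ℂ) * z)).re + (blaschke a n (((1:ℝ):ℂ) * z)).re * (D * z).re +
      ((D * z).im * (blaschke a n (((1:ℝ):ℂ) * z)).im + (blaschke a n (((1:ℝ):ℂ) * z)).im * (D * z).im)) 1 := by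
      rw [← hfun]; exact H
    convert H using 1
    rw [hB1z, hDzre, hDzim]
    have := Complex.normSq_apply (blaschke a n z)
    rw [hBnsq] at this
    nlinarith [this]
  have hg1 : g 1 = 1 := by
    show Complex.normSq (blaschke a n (((1:ℝ):ℂ) * z)) = 1
    rw [hB1z, hBnsq]
  -- limit via slope
  rw [hasDerivAt_iff_tendsto_slope] at hgd
  have hsub : nhdsWithin (1:ℝ) (Set.Iio 1) ≤ nhdsWithin 1 {(1:ℝ)}ᶜ :=
    nhdsWithin_mono _ (fun x hx => ne_of_lt hx)
  have ht1 : Tendsto (slope g 1) (nhdsWithin (1:ℝ) (Set.Iio 1)) (nhds (2*S)) :=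
    hgd.mono_left hsub
  have ht2 : Tendsto (fun lam : ℝ => (1 + lam)⁻¹) (nhdsWithin (1:ℝ) (Set.Iio 1))
      (nhds (2⁻¹)) := by
    have h2' : Tendsto (fun lam : ℝ => (1 + lam)⁻¹) (nhds (1:ℝ)) (nhds ((1+1:ℝ)⁻¹)) :=
      Tendsto.inv₀ ((continuous_const.add continuous_id).tendsto 1) (by norm_num)
    have he : ((1:ℝ)+1)⁻¹ = 2⁻¹ := by norm_num
    rw [← he]
    exact h2'.mono_left nhdsWithin_le_nhds
  have hprod := ht1.mul ht2
  have hval : (2*S) * 2⁻¹ = S := by ring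
  rw [hval] at hprod
  rw [hderivB, habsD]
  refine hprod.congr' ?_
  have hev1 : ∀ᶠ lam : ℝ in nhdsWithin 1 (Set.Iio 1), (0:ℝ) < lam :=
    eventually_nhdsWithin_of_eventually_nhds (eventually_gt_nhds (by norm_num))
  have hev2 : ∀ᶠ lam : ℝ in nhdsWithin (1:ℝ) (Set.Iio 1), lam ∈ Set.Iio (1:ℝ) :=
    eventually_mem_nhdsWithin
  filter_upwards [hev1, hev2] with lam h0 h1'
  have hlt : lam < 1 := h1'
  have hne1 : lam - 1 ≠ 0 := by linarith
  have hne2 : 1 + lam ≠ 0 := by linarith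
  rw [slope_def_field, hg1]
  rw [Complex.sq_norm]
  show (g lam - 1) / (lam - 1) * (1 + lam)⁻¹ = (1 - g lam) / (1 - lam^2)
  have hne3 : 1 - lam^2 ≠ 0 := by nlinarith
  field_simp
  ring

theorem stmt_17 (n : ℕ) (hn : 1 ≤ n) (a : ℕ → ℂ) (ha : ∀ j < n, ‖a j‖ < 1)
    (z : ℂ) (hz : ‖z‖ = 1) :
    (∀ lam : ℝ, 0 < lam → lam < 1 →
      Set.MapsTo (fun t : ℂ => (starRingEnd ℂ) z *
          ((t - (lam : ℂ) * z) / (1 - t * (lam : ℂ) * (starRingEnd ℂ) z)))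
        (Metric.ball 0 1) (Metric.ball 0 1) ∧
      ∀ t : ℂ, ‖t‖ = 1 →
        ‖(starRingEnd ℂ) z *
          ((t - (lam : ℂ) * z) / (1 - t * (lam : ℂ) * (starRingEnd ℂ) z))‖ = 1) ∧
    Filter.Tendsto
      (fun lam : ℝ => (1 - (‖blaschke a n ((lam : ℂ) * z)‖)^2) / (1 - lam^2))
      (nhdsWithin 1 (Set.Iio 1)) (nhds (‖deriv (blaschke a n) z‖)) := by
  constructor
  · intro lam h0 h1
    have habsw : ‖(lam : ℂ) * z‖ < 1 := by
      rw [norm_mul, Complex.norm_real, Real.norm_eq_abs, hz, mul_one, abs_of_pos h0]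
      exact h1
    have hrw : ∀ t : ℂ, t * (lam : ℂ) * (starRingEnd ℂ) z
        = t * (starRingEnd ℂ) ((lam : ℂ) * z) := by
      intro t
      rw [map_mul, Complex.conj_ofReal]
      ring
    constructor
    · intro t ht
      rw [Metric.mem_ball, dist_zero_right] at ht ⊢
      rw [norm_mul, Complex.norm_conj, hz, one_mul, hrw]
      exact mobius_lt t ((lam : ℂ) * z) ht habsw
    · intro t ht
      rw [norm_mul, Complex.norm_conj, hz, one_mul, hrw]
      exact mobius_eq t ((lam : ℂ) * z) ht habsw
  · exact aux_part_b n a ha z hz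
end
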